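/- arXiv:1401.0489 — 3 statements merged into one kernel-verified Lean document; each statement's English description precedes it below -/
import Mathlib

section
/- Let π be a permutation of an n-element set of order N, let p be a prime with p^β exactly dividing N (β ≥ 1), and let n' be the number of points whose cycle length under π is divisible by p^β. Then π^{N/p} is not the identity and fixes all but n' points; that is, |supp(π^{N/p})| = n'. -/
/-!
A point `x` is moved by `π ^ (N / p)` exactly when its cycle length `m` does not divide `N / p`,
i.e. when `p * m ∤ N`. Since `m ∣ N` and `p ^ β ∥ N`, this happens exactly when `p ^ β ∣ m`:
if `p ^ β ∣ m` then `p * m ∣ N` would force `p ^ (β + 1) ∣ N`, and otherwise the `p`-part of `m`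
is at most `p ^ (β - 1)`, so `p * m` still divides `N`.
-/

theorem Nat.mul_dvd_iff_not_pow_dvd {p β m N : ℕ} (hp : p.Prime) (hdvd : p ^ β ∣ N)
    (hndvd : ¬ p ^ (β + 1) ∣ N) (hm : m ∣ N) : p * m ∣ N ↔ ¬ p ^ β ∣ m := by
  refine ⟨fun h hβm => hndvd (by rw [pow_succ']; exact (mul_dvd_mul_left p hβm).trans h), ?_⟩
  intro hβm
  have hN : N ≠ 0 := by rintro rfl; exact hndvd (dvd_zero _)
  set k := m.factorization p
  have hk : k < β := by
    by_contra! hle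
    exact hβm ((pow_dvd_pow p hle).trans (Nat.ordProj_dvd m p))
  have hcop : Nat.Coprime (p ^ β) (m / p ^ k) :=
    (Nat.coprime_ordCompl hp (ne_zero_of_dvd_ne_zero hN hm)).pow_left β
  calc p * m = p ^ (k + 1) * (m / p ^ k) := by
        rw [pow_succ', mul_assoc, Nat.ordProj_mul_ordCompl_eq_self m p]
    _ ∣ p ^ β * (m / p ^ k) := mul_dvd_mul_right (pow_dvd_pow p hk) _
    _ ∣ N := hcop.mul_dvd_of_dvd_of_dvd hdvd ((Nat.ordCompl_dvd m p).trans hm)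

namespace Equiv.Perm

variable {α : Type*}

theorem pow_apply_eq_self_iff_minimalPeriod_dvd (σ : Perm α) (k : ℕ) (x : α) :
    (σ ^ k) x = x ↔ Function.minimalPeriod σ x ∣ k := by
  rw [← Function.isPeriodicPt_iff_minimalPeriod_dvd, Function.IsPeriodicPt,
    Function.IsFixedPt, iterate_eq_pow]

theorem minimalPeriod_dvd_orderOf [Finite α] (σ : Perm α) (x : α) :
    Function.minimalPeriod σ x ∣ orderOf σ := by
  rw [← pow_apply_eq_self_iff_minimalPeriod_dvd, pow_orderOf_eq_one, one_apply]

theorem support_pow_eq_filter [Fintype α] [DecidableEq α] (σ : Perm α) (k : ℕ) :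
    (σ ^ k).support = Finset.univ.filter (fun x => ¬ Function.minimalPeriod σ x ∣ k) := by
  ext x
  simp only [mem_support, Finset.mem_filter, Finset.mem_univ, true_and, ne_eq,
    pow_apply_eq_self_iff_minimalPeriod_dvd]

end Equiv.Perm

/-- If `p ^ β` exactly divides the order `N` of a permutation `π` and `n'` counts the
points whose cycle length is divisible by `p ^ β`, then `π ^ (N / p)` is a nontrivial
power whose support has exactly `n'` points. -/
theorem stmt_3 (n : ℕ) (π : Equiv.Perm (Fin n)) (N p β n' : ℕ)
    (hN : N = orderOf π) (hp : p.Prime) (hβ : 1 ≤ β)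
    (hdvd : p ^ β ∣ N) (hndvd : ¬ p ^ (β + 1) ∣ N)
    (hn' : n' =
      (Finset.univ.filter (fun x : Fin n => p ^ β ∣ Function.minimalPeriod π x)).card) :
    π ^ (N / p) ≠ 1 ∧ (π ^ (N / p)).support.card = n' := by
  subst hN hn'
  have hpN : p ∣ orderOf π := (dvd_pow_self p (by omega)).trans hdvd
  refine ⟨pow_ne_one_of_lt_orderOf ?_ (Nat.div_lt_self (orderOf_pos π) hp.one_lt), ?_⟩
  · exact (Nat.div_pos (Nat.le_of_dvd (orderOf_pos π) hpN) hp.pos).ne'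
  rw [Equiv.Perm.support_pow_eq_filter]
  refine congrArg Finset.card (Finset.filter_congr fun x _ => ?_)
  rw [Nat.dvd_div_iff_mul_dvd hpN,
    Nat.mul_dvd_iff_not_pow_dvd hp hdvd hndvd (Equiv.Perm.minimalPeriod_dvd_orderOf π x), not_not]
end

section
/- Let π be a permutation of an n-element set (n ≥ 2) whose order is greater than n^2. Then some nontrivial power of π fixes more than n/2 points. -/
/-!
Let `g` act on `n` points, let `N` be its order and `c x` the period of a point `x`,
so that `c x ∣ N` and `c x ≤ n`. If `p ^ a` exactly divides `N`, every point moved by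
`g ^ (N / p)` has `p ^ a ∣ c x`. So if each such power moves at least `n / k` points, then
`N ^ n ∣ (∏ x, c x) ^ k ≤ n ^ (n * k)`, that is, `N ≤ n ^ k`.
-/

open Finset

theorem Nat.factorization_le_of_dvd_of_not_dvd_div {c N p : ℕ} (hN : N ≠ 0) (hp : p.Prime)
    (hpN : p ∣ N) (hcN : c ∣ N) (hc : ¬ c ∣ N / p) :
    N.factorization p ≤ c.factorization p := by
  have hc0 : c ≠ 0 := ne_zero_of_dvd_ne_zero hN hcN
  have hNp : N / p ≠ 0 := (Nat.div_pos (Nat.le_of_dvd (Nat.pos_of_ne_zero hN) hpN) hp.pos).ne'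
  by_contra! hlt
  refine hc ((Nat.factorization_le_iff_dvd hc0 hNp).mp fun q => ?_)
  have hle := (Nat.factorization_le_iff_dvd hc0 hN).mpr hcN q
  rw [Nat.factorization_div hpN, hp.factorization, Finsupp.tsub_apply, Finsupp.single_apply]
  split_ifs with hq
  · subst hq; omega
  · omega

namespace MulAction

variable {M α : Type*} [Monoid M] [MulAction M α] (g : M)

theorem factorization_orderOf_le_factorization_period {p : ℕ} (hp : p.Prime)
    (hpg : p ∣ orderOf g) (hg : 0 < orderOf g) {x : α} (hx : g ^ (orderOf g / p) • x ≠ x) :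
    (orderOf g).factorization p ≤ (period g x).factorization p :=
  Nat.factorization_le_of_dvd_of_not_dvd_div hg.ne' hp hpg (period_dvd_orderOf g x)
    (mt pow_smul_eq_iff_period_dvd.mpr hx)

variable [Fintype α]

theorem prod_period_le_card_pow_card :
    ∏ x : α, period g x ≤ Fintype.card α ^ Fintype.card α :=
  prod_le_pow_card _ _ _ fun _ _ => Function.minimalPeriod_le_card

variable [DecidableEq α]

theorem card_moved_mul_factorization_orderOf_le {p : ℕ} (hp : p.Prime) (hpg : p ∣ orderOf g)
    (hg : 0 < orderOf g) :
    #{x : α | g ^ (orderOf g / p) • x ≠ x} * (orderOf g).factorization p ≤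
      (∏ x : α, period g x).factorization p := by
  rw [Nat.factorization_prod_apply fun x _ => (period_pos_of_orderOf_pos hg x).ne']
  calc #{x : α | g ^ (orderOf g / p) • x ≠ x} * (orderOf g).factorization p
      ≤ ∑ x ∈ {x : α | g ^ (orderOf g / p) • x ≠ x}, (period g x).factorization p :=
        card_nsmul_le_sum _ _ _ fun x hx =>
          factorization_orderOf_le_factorization_period g hp hpg hg (mem_filter.mp hx).2
    _ ≤ ∑ x, (period g x).factorization p := sum_le_sum_of_subset (filter_subset _ _)

theorem orderOf_pow_card_dvd_prod_period_pow (k : ℕ) (hg : 0 < orderOf g)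
    (hmoved : ∀ p, p.Prime → p ∣ orderOf g →
      Fintype.card α ≤ k * #{x : α | g ^ (orderOf g / p) • x ≠ x}) :
    orderOf g ^ Fintype.card α ∣ (∏ x : α, period g x) ^ k := by
  have hprod : ∏ x : α, period g x ≠ 0 :=
    prod_ne_zero_iff.mpr fun x _ => (period_pos_of_orderOf_pos hg x).ne'
  rw [← Nat.factorization_le_iff_dvd (pow_ne_zero _ hg.ne') (pow_ne_zero _ hprod)]
  intro p
  simp only [Nat.factorization_pow, Finsupp.smul_apply, smul_eq_mul]
  rcases eq_or_ne ((orderOf g).factorization p) 0 with h0 | h0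
  · simp [h0]
  have hpg := Nat.dvd_of_factorization_pos h0
  have hp : p.Prime := by_contra fun hp => h0 (Nat.factorization_eq_zero_of_not_prime _ hp)
  calc Fintype.card α * (orderOf g).factorization p
        ≤ k * #{x : α | g ^ (orderOf g / p) • x ≠ x} * (orderOf g).factorization p :=
        Nat.mul_le_mul_right _ (hmoved p hp hpg)
    _ ≤ k * (∏ x : α, period g x).factorization p := by
        rw [mul_assoc]
        exact Nat.mul_le_mul_left _ (card_moved_mul_factorization_orderOf_le g hp hpg hg)

theorem orderOf_le_card_pow [Nonempty α] (k : ℕ)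
    (hmoved : ∀ m, g ^ m ≠ 1 → Fintype.card α ≤ k * #{x : α | g ^ m • x ≠ x}) :
    orderOf g ≤ Fintype.card α ^ k := by
  rcases (orderOf g).eq_zero_or_pos with hg | hg
  · simp [hg]
  have hdvd := orderOf_pow_card_dvd_prod_period_pow g k hg fun p hp hpg =>
    hmoved _ (pow_ne_one_of_lt_orderOf (Nat.div_pos (Nat.le_of_dvd hg hpg) hp.pos).ne'
      (Nat.div_lt_self hg hp.one_lt))
  rw [← Nat.pow_le_pow_iff_left (Fintype.card_ne_zero (α := α))]
  calc orderOf g ^ Fintype.card α ≤ (∏ x : α, period g x) ^ k :=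
        Nat.le_of_dvd (pow_pos (prod_pos fun x _ => period_pos_of_orderOf_pos hg x) k) hdvd
    _ ≤ (Fintype.card α ^ Fintype.card α) ^ k :=
        Nat.pow_le_pow_left (prod_period_le_card_pow_card g) k
    _ = (Fintype.card α ^ k) ^ Fintype.card α := by rw [← pow_mul, ← pow_mul, mul_comm]

end MulAction

/-- A permutation of an `n`-element set (`n ≥ 2`) of order greater than `n ^ 2` has
a nontrivial power fixing more than `n / 2` points. -/
theorem stmt_13 (n : ℕ) (hn : 2 ≤ n) (π : Equiv.Perm (Fin n))
    (h : n ^ 2 < orderOf π) :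
    ∃ m : ℕ, π ^ m ≠ 1 ∧
      n < 2 * (Finset.univ.filter (fun x : Fin n => (π ^ m) x = x)).card := by
  by_contra! hfixed
  have : Nonempty (Fin n) := ⟨⟨0, by omega⟩⟩
  refine (MulAction.orderOf_le_card_pow (α := Fin n) π 2 fun m hm => ?_).not_gt (by simpa using h)
  have hsplit := card_filter_add_card_filter_not (s := univ) fun x : Fin n => (π ^ m) x = x
  simp only [Equiv.Perm.smul_def, Fintype.card_fin, card_univ, ne_eq] at hsplit ⊢
  have := hfixed m hm
  omega
end

section
/- If p_1 < ... < p_r are distinct primes with p_1 + ... + p_r ≤ n, then S_n contains an element of order p_1·p_2·...·p_r. -/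
/-- If `p 0 < p 1 < ⋯` are distinct primes with `∑ i, p i ≤ n`, then `S_n` contains
an element of order `∏ i, p i`. -/
theorem stmt_17 (n r : ℕ) (p : Fin r → ℕ)
    (hp : ∀ i, (p i).Prime) (hmono : StrictMono p)
    (hsum : ∑ i, p i ≤ n) :
    ∃ σ : Equiv.Perm (Fin n), orderOf σ = ∏ i, p i := by
  set m : Multiset ℕ := Multiset.map p Finset.univ.val with hm
  have hmsum : m.sum = ∑ i, p i := rfl
  obtain ⟨g, hg⟩ := (Equiv.Perm.exists_with_cycleType_iff (Fin n) (m := m)).mpr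
    ⟨by simpa [hmsum] using hsum, by
      intro a ha
      obtain ⟨i, _, rfl⟩ := Multiset.mem_map.mp ha
      exact (hp i).two_le⟩
  refine ⟨g, ?_⟩
  rw [← Equiv.Perm.lcm_cycleType, hg]
  apply Nat.dvd_antisymm
  · rw [Multiset.lcm_dvd]
    intro a ha
    obtain ⟨i, _, rfl⟩ := Multiset.mem_map.mp ha
    exact Finset.dvd_prod_of_mem p (Finset.mem_univ i)
  · apply Finset.prod_dvd_of_isRelPrime
    · intro i _ j _ hij
      exact Nat.coprime_iff_isRelPrime.mp ((Nat.coprime_primes (hp i) (hp j)).mpr (hmono.injective.ne hij))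
    · intro i _
      exact Multiset.dvd_lcm (Multiset.mem_map.mpr ⟨i, Finset.mem_univ_val i, rfl⟩)
end
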